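/- Let A be a non-degenerate n-dimensional evolution algebra (char 0) with natural basis B, let T be a twin class with T^{wl} := {i ∈ T : ω_{ii} ≠ 0} nonempty, and let d be a derivation with d_{ij} = 0 for all distinct i, j ∈ T^{wl}. Then for every j ∈ T \ T^{wl} and every i ∈ T^{wl}, Σ_{k ∈ T^{wl}} ω_{ik} d_{kj} = 0; in particular, if the submatrix (ω_{ij})_{i,j ∈ T^{wl}} is non-singular, then d_{ij} = 0 whenever i ∈ T^{wl} or j ∈ T^{wl}. -/

import Mathlib

/-!
Derivation entries `d_{kj}` between rows with different supports vanish, so for `i, j` in a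
twin class the identity `∑ₖ ω_{ik} d_{kj} = 2 ω_{ij} d_{ii}` only sees the indices `k` with a loop
in the class. For `j` without a loop the right-hand side vanishes because `ω_{ij} = 0`; for `j = i`
with a loop the left-hand side collapses to `ω_{ii} d_{ii}`, so `d_{ii} = 0`. A non-singular loop
block then kills the columns `d_{·j}` on the loops, and `ω_{jk} d_{ij} + ω_{ik} d_{ji} = 0` with
`k = j` transfers vanishing from rows to columns.
-/

open Function

theorem Matrix.eq_zero_of_sum_submatrix_mul_eq_zero {ι R : Type*} [CommRing R]
    [NoZeroDivisors R] [DecidableEq ι] {ω : Matrix ι ι R} {L : Finset ι}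
    (hdet : (Matrix.of fun a b : L => ω a.1 b.1).det ≠ 0) {v : ι → R}
    (hv : ∀ i ∈ L, ∑ k ∈ L, ω i k * v k = 0) {k : ι} (hk : k ∈ L) : v k = 0 := by
  have hmulVec : Matrix.mulVec (Matrix.of fun a b : L => ω a.1 b.1) (fun k : L => v k.1) = 0 := by
    funext i
    simp only [Matrix.mulVec, dotProduct, Matrix.of_apply, Pi.zero_apply]
    rw [Finset.sum_coe_sort L fun k => ω i.1 k * v k]
    exact hv i.1 i.2
  exact congrFun (Matrix.eq_zero_of_mulVec_eq_zero hdet hmulVec) ⟨k, hk⟩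

namespace EvolutionAlgebra

variable {ι K : Type*}

-- `support (ω j)` is the first descendant set `D¹(j)`.
def twinClass [Zero K] (ω : Matrix ι ι K) (t : ι) : Set ι :=
  {j | support (ω j) = support (ω t)}

section Ring

variable [Ring K] [NoZeroDivisors K] {ω d : Matrix ι ι K}

theorem derivation_apply_eq_zero_of_mul_eq_zero
    (hd1 : ∀ i j k, i ≠ j → ω j k * d i j + ω i k * d j i = 0)
    {i j m : ι} (hij : i ≠ j) (hjm : ω j m ≠ 0) (h : ω i m * d j i = 0) : d i j = 0 := by
  have h1 := hd1 i j m hij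
  rw [h, add_zero] at h1
  exact (mul_eq_zero.mp h1).resolve_left hjm

theorem derivation_apply_eq_zero_of_support_ne (hnd : ∀ i, ∃ k, ω i k ≠ 0)
    (hd1 : ∀ i j k, i ≠ j → ω j k * d i j + ω i k * d j i = 0)
    {i j : ι} (hne : support (ω i) ≠ support (ω j)) : d i j = 0 := by
  have hij : i ≠ j := by rintro rfl; exact hne rfl
  obtain ⟨m, hm⟩ : ∃ m, ¬(ω i m ≠ 0 ↔ ω j m ≠ 0) := by
    by_contra! h
    exact hne (Set.ext h)
  by_cases him : ω i m = 0
  · have hjm : ω j m ≠ 0 := by simpa [him] using hm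
    exact derivation_apply_eq_zero_of_mul_eq_zero hd1 hij hjm (by rw [him, zero_mul])
  · have hjm : ω j m = 0 := by simpa [him] using hm
    have hji : d j i = 0 :=
      derivation_apply_eq_zero_of_mul_eq_zero hd1 hij.symm him (by rw [hjm, zero_mul])
    obtain ⟨m', hm'⟩ := hnd j
    exact derivation_apply_eq_zero_of_mul_eq_zero hd1 hij hm' (by rw [hji, mul_zero])

theorem sum_mul_derivation_eq_sum_loops [Fintype ι] (hnd : ∀ i, ∃ k, ω i k ≠ 0)
    (hd1 : ∀ i j k, i ≠ j → ω j k * d i j + ω i k * d j i = 0)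
    {t : ι} {L : Finset ι} (hL : ∀ k, k ∈ L ↔ k ∈ twinClass ω t ∧ ω k k ≠ 0)
    {i j : ι} (hi : i ∈ twinClass ω t) (hj : j ∈ twinClass ω t) :
    ∑ k, ω i k * d k j = ∑ k ∈ L, ω i k * d k j := by
  refine (Finset.sum_subset (Finset.subset_univ L) fun k _ hkL => ?_).symm
  by_cases hik : ω i k = 0
  · rw [hik, zero_mul]
  by_cases hk : k ∈ twinClass ω t
  · have hkk : ω k k ≠ 0 := by
      change k ∈ support (ω k)
      rw [hk, ← hi]
      exact hik
    exact absurd ((hL k).mpr ⟨hk, hkk⟩) hkL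
  · have hne : support (ω k) ≠ support (ω j) := by
      rw [hj]
      exact hk
    rw [derivation_apply_eq_zero_of_support_ne hnd hd1 hne, mul_zero]

end Ring

section CommRing

variable [CommRing K] [NoZeroDivisors K] [Fintype ι] {ω d : Matrix ι ι K}
  {t : ι} {L : Finset ι}

theorem sum_loops_mul_derivation_eq_zero (hnd : ∀ i, ∃ k, ω i k ≠ 0)
    (hd1 : ∀ i j k, i ≠ j → ω j k * d i j + ω i k * d j i = 0)
    (hd2 : ∀ i j, ∑ k, ω i k * d k j = 2 * ω i j * d i i)
    (hL : ∀ k, k ∈ L ↔ k ∈ twinClass ω t ∧ ω k k ≠ 0)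
    {i j : ι} (hi : i ∈ twinClass ω t) (hj : j ∈ twinClass ω t) (hjL : j ∉ L) :
    ∑ k ∈ L, ω i k * d k j = 0 := by
  have hij : ω i j = 0 := by
    by_contra hij
    refine hjL ((hL j).mpr ⟨hj, ?_⟩)
    change j ∈ support (ω j)
    rw [hj, ← hi]
    exact hij
  rw [← sum_mul_derivation_eq_sum_loops hnd hd1 hL hi hj, hd2, hij, mul_zero, zero_mul]

theorem derivation_diag_eq_zero_of_mem_loops (hnd : ∀ i, ∃ k, ω i k ≠ 0)
    (hd1 : ∀ i j k, i ≠ j → ω j k * d i j + ω i k * d j i = 0)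
    (hd2 : ∀ i j, ∑ k, ω i k * d k j = 2 * ω i j * d i i)
    (hL : ∀ k, k ∈ L ↔ k ∈ twinClass ω t ∧ ω k k ≠ 0)
    (hoff : ∀ i ∈ L, ∀ j ∈ L, i ≠ j → d i j = 0) {i : ι} (hi : i ∈ L) : d i i = 0 := by
  obtain ⟨hiT, hii⟩ := (hL i).mp hi
  have hsum : ∑ k ∈ L, ω i k * d k i = ω i i * d i i :=
    Finset.sum_eq_single_of_mem i hi fun k hk hki => by rw [hoff k hk i hi hki, mul_zero]
  have h := hd2 i i
  rw [sum_mul_derivation_eq_sum_loops hnd hd1 hL hiT hiT, hsum] at h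
  exact (mul_eq_zero.mp (by linear_combination -h : ω i i * d i i = 0)).resolve_left hii

theorem derivation_row_eq_zero_of_mem_loops [DecidableEq ι] (hnd : ∀ i, ∃ k, ω i k ≠ 0)
    (hd1 : ∀ i j k, i ≠ j → ω j k * d i j + ω i k * d j i = 0)
    (hd2 : ∀ i j, ∑ k, ω i k * d k j = 2 * ω i j * d i i)
    (hL : ∀ k, k ∈ L ↔ k ∈ twinClass ω t ∧ ω k k ≠ 0)
    (hoff : ∀ i ∈ L, ∀ j ∈ L, i ≠ j → d i j = 0)
    (hdet : (Matrix.of fun a b : L => ω a.1 b.1).det ≠ 0) {i : ι} (hi : i ∈ L) (j : ι) :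
    d i j = 0 := by
  have hiT := ((hL i).mp hi).1
  by_cases hjL : j ∈ L
  · obtain rfl | hij := eq_or_ne i j
    · exact derivation_diag_eq_zero_of_mem_loops hnd hd1 hd2 hL hoff hi
    · exact hoff i hi j hjL hij
  by_cases hjT : j ∈ twinClass ω t
  · refine Matrix.eq_zero_of_sum_submatrix_mul_eq_zero hdet (v := fun k => d k j) ?_ hi
    exact fun i' hi' =>
      sum_loops_mul_derivation_eq_zero hnd hd1 hd2 hL ((hL i').mp hi').1 hjT hjL
  · refine derivation_apply_eq_zero_of_support_ne hnd hd1 fun h => hjT ?_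
    change support (ω j) = support (ω t)
    rw [← h]
    exact hiT

end CommRing

end EvolutionAlgebra

open EvolutionAlgebra in
theorem derivation_loop_class_structure_general {K : Type*} [Field K] {n : ℕ}
    (ω d : Matrix (Fin n) (Fin n) K)
    (hnd : ∀ i : Fin n, ∃ k, ω i k ≠ 0)
    (hd1 : ∀ i j k : Fin n, i ≠ j → ω j k * d i j + ω i k * d j i = 0)
    (hd2 : ∀ i j : Fin n, ∑ k, ω i k * d k j = 2 * ω i j * d i i)
    (t₀ : Fin n)
    (T : Set (Fin n)) (hT : T = {j | {k | ω j k ≠ 0} = {k | ω t₀ k ≠ 0}})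
    (Twl : Finset (Fin n)) (hTwl : ∀ i, i ∈ Twl ↔ (i ∈ T ∧ ω i i ≠ 0))
    (hoff : ∀ i ∈ Twl, ∀ j ∈ Twl, i ≠ j → d i j = 0) :
    (∀ j ∈ T, j ∉ Twl → ∀ i ∈ Twl, ∑ k ∈ Twl, ω i k * d k j = 0) ∧
    ((Matrix.of (fun a b : Twl => ω a.1 b.1)).det ≠ 0 →
      ∀ i j : Fin n, (i ∈ Twl ∨ j ∈ Twl) → d i j = 0) := by
  subst hT
  have hL : ∀ k, k ∈ Twl ↔ k ∈ twinClass ω t₀ ∧ ω k k ≠ 0 := hTwl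
  refine ⟨fun j hj hjL i hi => sum_loops_mul_derivation_eq_zero hnd hd1 hd2 hL
    ((hL i).mp hi).1 hj hjL, fun hdet i j hij => ?_⟩
  have hrow : ∀ {i}, i ∈ Twl → ∀ j, d i j = 0 := fun hi =>
    derivation_row_eq_zero_of_mem_loops hnd hd1 hd2 hL hoff hdet hi
  rcases hij with hi | hj
  · exact hrow hi j
  · obtain rfl | hij := eq_or_ne i j
    · exact hrow hj _
    · exact derivation_apply_eq_zero_of_mul_eq_zero hd1 hij ((hL j).mp hj).2
        (by rw [hrow hj i, mul_zero])

/-- Let `T` be the twin class of `t₀` and `Twl = {i ∈ T : ω_{ii} ≠ 0}` nonempty.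
If `d_{ij} = 0` for all distinct `i, j ∈ Twl`, then for every `j ∈ T \ Twl` and
`i ∈ Twl` we have `∑_{k ∈ Twl} ω_{ik} d_{kj} = 0`; and if moreover the submatrix
`(ω_{ij})_{i,j ∈ Twl}` is non-singular, then `d_{ij} = 0` whenever `i ∈ Twl` or
`j ∈ Twl`. -/
theorem derivation_loop_class_structure {K : Type*} [Field K] [CharZero K] {n : ℕ}
    (ω d : Matrix (Fin n) (Fin n) K)
    (hnd : ∀ i : Fin n, ∃ k, ω i k ≠ 0)
    (hd1 : ∀ i j k : Fin n, i ≠ j → ω j k * d i j + ω i k * d j i = 0)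
    (hd2 : ∀ i j : Fin n, ∑ k, ω i k * d k j = 2 * ω i j * d i i)
    (t₀ : Fin n)
    (T : Set (Fin n)) (hT : T = {j | {k | ω j k ≠ 0} = {k | ω t₀ k ≠ 0}})
    (Twl : Finset (Fin n)) (hTwl : ∀ i, i ∈ Twl ↔ (i ∈ T ∧ ω i i ≠ 0))
    (hwl : Twl.Nonempty)
    (hoff : ∀ i ∈ Twl, ∀ j ∈ Twl, i ≠ j → d i j = 0) :
    (∀ j ∈ T, j ∉ Twl → ∀ i ∈ Twl, ∑ k ∈ Twl, ω i k * d k j = 0) ∧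
    ((Matrix.of (fun a b : Twl => ω a.1 b.1)).det ≠ 0 →
      ∀ i j : Fin n, (i ∈ Twl ∨ j ∈ Twl) → d i j = 0) :=
  derivation_loop_class_structure_general ω d hnd hd1 hd2 t₀ T hT Twl hTwl hoff
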